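/- arXiv:1108.2793 — 10 statements merged into one kernel-verified Lean document; each statement's English description precedes it below -/
import Mathlib

section
/- Let t be an indeterminate. The polynomial X³ − 3X − t is irreducible in (ℚ(t))[X], where ℚ(t) is the field of rational functions over ℚ. -/
open Polynomial

noncomputable def p0 : (Polynomial ℚ)[X] := X ^ 3 - 3 * X - C Polynomial.X

lemma p0_monic : p0.Monic := by unfold p0; monicity!

lemma p0_natDegree : p0.natDegree = 3 := by unfold p0; compute_degree!

lemma p0_map : p0.map (algebraMap (Polynomial ℚ) (RatFunc ℚ)) =
    (X ^ 3 - 3 * X - C RatFunc.X : Polynomial (RatFunc ℚ)) := by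
  simp [p0, Polynomial.map_ofNat, RatFunc.algebraMap_X]

lemma no_root (r : RatFunc ℚ) : r ^ 3 - 3 * r - RatFunc.X ≠ 0 := by
  intro h
  have hint : IsIntegral (Polynomial ℚ) r := by
    refine ⟨p0, p0_monic, ?_⟩
    rw [← eval_map, p0_map]
    simpa [RatFunc.algebraMap_X] using h
  obtain ⟨q, hq⟩ := IsIntegrallyClosed.isIntegral_iff.mp hint
  have hq' : q ^ 3 - 3 * q = Polynomial.X := by
    apply IsFractionRing.injective (Polynomial ℚ) (RatFunc ℚ)
    push_cast [map_sub, map_pow, map_mul, map_ofNat, RatFunc.algebraMap_X, hq]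
    linear_combination h
  have := congrArg Polynomial.natDegree hq'
  rw [Polynomial.natDegree_X] at this
  rcases Nat.eq_zero_or_pos q.natDegree with h0 | h0
  · have hle : (q ^ 3 - 3 * q).natDegree ≤ 0 :=
      (Polynomial.natDegree_sub_le _ _).trans (max_le
        (by simp [Polynomial.natDegree_pow, h0])
        (Polynomial.natDegree_mul_le.trans (by simp [h0])))
    omega
  · have h3 : (q ^ 3).natDegree = 3 * q.natDegree := by
      rw [Polynomial.natDegree_pow]
    have hlt : (3 * q : Polynomial ℚ).natDegree < (q ^ 3).natDegree := by
      rw [h3]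
      calc (3 * q : Polynomial ℚ).natDegree ≤ q.natDegree :=
            (Polynomial.natDegree_mul_le).trans (by simp)
        _ < 3 * q.natDegree := by omega
    rw [Polynomial.natDegree_sub_eq_left_of_natDegree_lt hlt, h3] at this
    omega

/-- The polynomial `X³ - 3X - t` is irreducible over the field `ℚ(t)` of rational
functions in the indeterminate `t` over `ℚ`. -/
theorem X_cubed_sub_three_X_sub_t_irreducible :
    Irreducible (X ^ 3 - 3 * X - C RatFunc.X : Polynomial (RatFunc ℚ)) := by
  have hdeg : (X ^ 3 - 3 * X - C RatFunc.X : Polynomial (RatFunc ℚ)).natDegree = 3 := by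
    rw [← p0_map, p0_monic.natDegree_map, p0_natDegree]
  rw [irreducible_iff_roots_eq_zero_of_degree_le_three (by omega) (by omega)]
  rw [Multiset.eq_zero_iff_forall_notMem]
  intro r hr
  have hne : (X ^ 3 - 3 * X - C RatFunc.X : Polynomial (RatFunc ℚ)) ≠ 0 := by
    rw [← p0_map]; exact (p0_monic.map _).ne_zero
  rw [mem_roots hne, IsRoot.def] at hr
  apply no_root r
  simpa using hr
end

section
/- If a is a real number that is transcendental over ℚ, then the polynomial X³ − 3X − a is irreducible over the subfield ℚ(a) of ℝ. -/
open Polynomial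

/-- Elements of `Subring.closure {a}` are values of rational polynomials at `a`. -/
lemma exists_aeval_of_mem_closure {a y : ℝ} (hy : y ∈ Subring.closure ({a} : Set ℝ)) :
    ∃ F : ℚ[X], aeval a F = y := by
  have h : y ∈ (Algebra.adjoin ℤ ({a} : Set ℝ)).toSubring := by
    rw [Algebra.adjoin_eq_ring_closure]
    exact Subring.closure_mono Set.subset_union_right hy
  rw [Subalgebra.mem_toSubring, Algebra.adjoin_singleton_eq_range_aeval] at h
  obtain ⟨F, hF⟩ := h
  exact ⟨F.map (algebraMap ℤ ℚ), by rwa [aeval_map_algebraMap]⟩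

lemma no_poly_identity (F G : ℚ[X]) (hG : G ≠ 0)
    (h : F ^ 3 - 3 * F * G ^ 2 - X * G ^ 3 = 0) : False := by
  have hF : F ≠ 0 := by
    rintro rfl
    simp only [zero_pow, mul_zero, zero_mul, ne_eq, OfNat.ofNat_ne_zero,
      not_false_eq_true, zero_sub, zero_mul, mul_zero, sub_zero, neg_eq_zero,
      mul_eq_zero, X_ne_zero, pow_eq_zero_iff, false_or] at h
    exact hG h
  have heq : X * G ^ 3 = F ^ 3 - 3 * F * G ^ 2 := by linear_combination -h
  set m := F.natDegree with hm
  set n := G.natDegree with hn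
  have h3 : (3 : ℚ[X]) ≠ 0 := by norm_num
  have hdeg1 : (X * G ^ 3).natDegree = 1 + 3 * n := by
    rw [natDegree_mul X_ne_zero (pow_ne_zero _ hG), natDegree_X, natDegree_pow]
  have hdeg2 : (3 * F * G ^ 2).natDegree = m + 2 * n := by
    rw [natDegree_mul (mul_ne_zero h3 hF) (pow_ne_zero _ hG), natDegree_mul h3 hF,
      natDegree_pow]
    simp [hm, hn]
  rcases le_or_gt m n with hmn | hmn
  · have hle : (F ^ 3 - 3 * F * G ^ 2).natDegree ≤ 3 * n := by
      refine (natDegree_sub_le _ _).trans ?_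
      rw [natDegree_pow, hdeg2]
      omega
    rw [← heq, hdeg1] at hle
    omega
  · have hlt : (3 * F * G ^ 2).natDegree < (F ^ 3).natDegree := by
      rw [hdeg2, natDegree_pow]
      omega
    have := natDegree_sub_eq_left_of_natDegree_lt hlt
    rw [← heq, hdeg1, natDegree_pow] at this
    omega

/-- If `a : ℝ` is transcendental over `ℚ`, then `X³ - 3X - a` is irreducible over the
subfield `ℚ(a) = Subfield.closure {a}` of `ℝ`. -/
theorem irreducible_of_transcendental (a : ℝ) (ha : Transcendental ℚ a) :
    Irreducible
      (X ^ 3 - 3 * X - C (⟨a, Subfield.subset_closure rfl⟩ : Subfield.closure {a}) :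
        Polynomial (Subfield.closure {a})) := by
  set K := Subfield.closure ({a} : Set ℝ)
  set α : K := ⟨a, Subfield.subset_closure rfl⟩
  set p : Polynomial K := X ^ 3 - 3 * X - C α with hp
  have hdeg : p.natDegree = 3 := by
    rw [hp]
    compute_degree!
  rw [irreducible_iff_roots_eq_zero_of_degree_le_three (by omega) (by omega)]
  rw [Multiset.eq_zero_iff_forall_notMem]
  intro r hr
  have hp0 : p ≠ 0 := fun h => by simp [h] at hdeg
  rw [mem_roots hp0] at hr
  have hroot : r ^ 3 - 3 * r - α = 0 := by
    have := hr
    simp only [IsRoot, hp, eval_sub, eval_pow, eval_mul, eval_X, eval_C, eval_ofNat] at this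
    linear_combination this
  -- pass to ℝ
  have hR : (r : ℝ) ^ 3 - 3 * (r : ℝ) - a = 0 := by
    have := congrArg (Subtype.val) hroot
    push_cast at this
    exact this
  have haT : ∀ P : ℚ[X], aeval a P = 0 → P = 0 := transcendental_iff.mp ha
  -- represent r as a ratio
  obtain ⟨y, hy, z, hz, hyz⟩ := Subfield.mem_closure_iff.mp r.2
  obtain ⟨F, hF⟩ := exists_aeval_of_mem_closure hy
  obtain ⟨G, hG⟩ := exists_aeval_of_mem_closure hz
  by_cases hz0 : z = 0
  · -- then r = 0 and a = 0, contradicting transcendence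
    have hr0 : (r : ℝ) = 0 := by rw [← hyz, hz0, div_zero]
    rw [hr0] at hR
    have : a = 0 := by linarith
    exact ha (this ▸ isAlgebraic_zero)
  · have hGne : G ≠ 0 := fun h => hz0 (by rw [← hG, h, map_zero])
    -- clear denominators
    have key : aeval a (F ^ 3 - 3 * F * G ^ 2 - X * G ^ 3) = 0 := by
      have hy' : y = (r : ℝ) * z := by
        rw [← hyz]; field_simp
      simp only [map_sub, map_mul, map_pow, map_ofNat, aeval_X, hF, hG]
      rw [hy']
      linear_combination (z:ℝ)^3 * hR
    exact no_poly_identity F G hGne (haT _ key)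
end

section
/- For every nonzero rational number c, the polynomial X³ − 3X − c² is irreducible over ℚ. (In particular, the equation x³ − 3x = c² has no rational solution x when c is a nonzero rational; this follows from the fact that the elliptic curve y² = x³ − 3x has only the rational points (0,0) and the point at infinity.) -/
/-!
A rational root `x` of `X³ - 3X - c²` is a point `(x, c)` with `c ≠ 0` on the curve
`y² = x³ - 3x`. Writing `x = a / b` in lowest terms turns it into `a b (a² - 3b²) = n²` with
`n ≠ 0`. The three factors are pairwise coprime once a factor `3` is removed from `a`, so
they are squares up to sign; this leads either to `α⁴ + γ² = 3β⁴`, impossible mod `3`, or to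
a primitive solution of `s⁴ - 3e⁴ = t²` with `e ≠ 0`. The latter is excluded by Fermat's
descent through the `2`-isogenous curve: factoring `(s² - t)(s² + t) = 3e⁴` gives
`G⁴ + 12H⁴ = s²` with `2H ∣ e`, and factoring `(s - G²)(s + G²) = 12H⁴` gives a new
solution `s'⁴ - 3e'⁴ = t'²` with `e' ∣ H`. Parity is forced modulo `8`, and the wrong
distributions of the factors `3` and `4` are excluded modulo `4`.
-/

open Polynomial

theorem Int.exists_eq_pow_of_mul_eq_pow_of_nonneg {a b c : ℤ} {k : ℕ} (hab : IsCoprime a b)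
    (ha : 0 ≤ a) (h : a * b = c ^ k) : ∃ d, a = d ^ k := by
  obtain ⟨d, hd⟩ := exists_eq_pow_of_mul_eq_pow (α := ℕ)
    (Nat.isUnit_iff.2 (Int.isCoprime_iff_gcd_eq_one.1 hab))
    (by rw [← Int.natAbs_mul, h, Int.natAbs_pow])
  exact ⟨d, by rw [← Int.natAbs_of_nonneg ha, hd]; push_cast; rfl⟩

theorem IsCoprime.of_add_sub {R : Type*} [CommRing R] {u v : R}
    (h : IsCoprime (u + v) (v - u)) : IsCoprime u v := by
  obtain ⟨x, y, hxy⟩ := h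
  exact ⟨x - y, x + y, by linear_combination hxy⟩

theorem nonneg_and_nonneg_of_mul_nonneg_of_add_pos {R : Type*} [Semiring R] [LinearOrder R]
    [IsStrictOrderedRing R] {a b : R} (h : 0 ≤ a * b) (hab : 0 < a + b) : 0 ≤ a ∧ 0 ≤ b :=
  (nonneg_and_nonneg_or_nonpos_and_nonpos_of_mul_nonneg h).resolve_right
    fun ⟨ha, hb⟩ => (add_nonpos ha hb).not_gt hab

theorem Int.exists_eq_three_mul_pow_four_of_mul_eq {P Q w : ℤ} (hPQ : IsCoprime P Q)
    (hP : 0 ≤ P) (hQ : 0 ≤ Q) (h : P * Q = 3 * w ^ 4) (h3 : 3 ∣ P) :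
    ∃ i j, P = 3 * i ^ 4 ∧ Q = j ^ 4 ∧ i ∣ w := by
  obtain ⟨P', rfl⟩ := h3
  have hP'Q : P' * Q = w ^ 4 := by linarith
  have hcop : IsCoprime P' Q := hPQ.of_mul_left_right
  obtain ⟨i, rfl⟩ := Int.exists_eq_pow_of_mul_eq_pow_of_nonneg hcop (by linarith) hP'Q
  obtain ⟨j, rfl⟩ := Int.exists_eq_pow_of_mul_eq_pow_of_nonneg hcop.symm hQ
    (by rw [mul_comm, hP'Q])
  exact ⟨i, j, rfl, rfl, (Int.pow_dvd_pow_iff four_ne_zero).1 ⟨_, hP'Q.symm⟩⟩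

theorem Int.pow_four_sub_three_mul_pow_four_ne_sq_of_odd {s e t : ℤ} (he : Odd e) :
    s ^ 4 - 3 * e ^ 4 ≠ t ^ 2 := by
  obtain ⟨m, rfl⟩ := he
  intro h
  have h8 := congrArg (Int.cast : ℤ → ZMod 8) h
  push_cast at h8
  generalize (s : ZMod 8) = s, (m : ZMod 8) = m, (t : ZMod 8) = t at h8
  revert s m t
  decide

theorem Int.three_mul_pow_four_add_four_mul_pow_four_ne_sq_of_odd {i j s : ℤ} (hs : Odd s) :
    3 * i ^ 4 + 4 * j ^ 4 ≠ s ^ 2 := by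
  obtain ⟨k, rfl⟩ := hs
  intro h
  have h4 := congrArg (Int.cast : ℤ → ZMod 4) h
  push_cast at h4
  generalize (k : ZMod 4) = k, (i : ZMod 4) = i, (j : ZMod 4) = j at h4
  revert k i j
  decide

theorem Int.three_mul_pow_four_sub_pow_four_ne_sq_of_odd {i j G : ℤ} (hG : Odd G) :
    3 * i ^ 4 - j ^ 4 ≠ G ^ 2 := by
  obtain ⟨k, rfl⟩ := hG
  intro h
  have h4 := congrArg (Int.cast : ℤ → ZMod 4) h
  push_cast at h4
  generalize (k : ZMod 4) = k, (i : ZMod 4) = i, (j : ZMod 4) = j at h4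
  revert k i j
  decide

theorem Int.pow_four_add_sq_ne_three_mul_pow_four {x y z : ℤ} (hx : ¬ 3 ∣ x) :
    x ^ 4 + y ^ 2 ≠ 3 * z ^ 4 := by
  have hx3 : (x : ZMod 3) ≠ 0 :=
    (ZMod.intCast_zmod_eq_zero_iff_dvd x 3).not.mpr (by exact_mod_cast hx)
  intro h
  have h3 := congrArg (Int.cast : ℤ → ZMod 3) h
  push_cast at h3
  generalize (x : ZMod 3) = x, (y : ZMod 3) = y, (z : ZMod 3) = z at h3 hx3
  revert x y z
  decide

theorem exists_pow_four_add_twelve_mul_pow_four_eq_sq_of_mul_eq {u v s f : ℤ}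
    (huv : IsCoprime u v) (hu : 0 ≤ u) (hv : 0 ≤ v) (hs : Odd s) (hsum : u + v = s ^ 2)
    (hprod : u * v = 12 * f ^ 4) :
    ∃ G H, G ^ 4 + 12 * H ^ 4 = s ^ 2 ∧ IsCoprime s G ∧ H ∣ f := by
  wlog h2u : 2 ∣ u generalizing u v
  · have h2v : 2 ∣ v :=
      (Int.prime_two.dvd_or_dvd ⟨6 * f ^ 4, by rw [hprod]; ring⟩).resolve_left h2u
    exact this huv.symm hv hu (by rw [add_comm, hsum]) (by rw [mul_comm, hprod]) h2v
  have h2v : ¬ 2 ∣ v := fun h2v => Int.prime_two.not_isUnit (huv.isUnit_of_dvd' h2u h2v)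
  have h4u : 2 ^ 2 ∣ u :=
    ((Int.prime_two.coprime_iff_not_dvd.2 h2v).pow_left).dvd_of_dvd_mul_right
      ⟨3 * f ^ 4, by rw [hprod]; ring⟩
  obtain ⟨u', rfl⟩ := h4u
  have hu'v : IsCoprime u' v := huv.of_mul_left_right
  have hprod' : u' * v = 3 * f ^ 4 := by linarith
  have hsv : IsCoprime (s ^ 2) v := by
    have := huv.add_mul_right_left 1
    rwa [one_mul, hsum] at this
  rcases Int.prime_three.dvd_or_dvd ⟨f ^ 4, hprod'⟩ with h3 | h3
  · obtain ⟨i, j, rfl, rfl, hi⟩ :=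
      Int.exists_eq_three_mul_pow_four_of_mul_eq hu'v (by linarith) hv hprod' h3
    refine ⟨j, i, by rw [← hsum]; ring, ?_, hi⟩
    exact (IsCoprime.pow_left_iff two_pos).1 ((IsCoprime.pow_right_iff four_pos).1 hsv)
  · obtain ⟨i, j, rfl, rfl, -⟩ := Int.exists_eq_three_mul_pow_four_of_mul_eq hu'v.symm hv
      (by linarith) (by rw [mul_comm, hprod']) h3
    exact (Int.three_mul_pow_four_add_four_mul_pow_four_ne_sq_of_odd (i := i) (j := j) hs
      (by rw [← hsum]; ring)).elim

theorem exists_pow_four_add_twelve_mul_pow_four_eq_sq {s e t : ℤ} (hcop : IsCoprime (3 * e) s)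
    (h : s ^ 4 - 3 * e ^ 4 = t ^ 2) :
    ∃ G H, G ^ 4 + 12 * H ^ 4 = s ^ 2 ∧ IsCoprime s G ∧ Odd s ∧ 2 * H ∣ e := by
  have he : Even e :=
    Int.not_odd_iff_even.1 fun he => Int.pow_four_sub_three_mul_pow_four_ne_sq_of_odd he h
  have hs : Odd s := Int.not_even_iff_odd.1 fun hs => Int.prime_two.not_isUnit
    (hcop.isUnit_of_dvd' (he.two_dvd.mul_left 3) hs.two_dvd)
  have ht : Odd t := by
    have : Odd (t ^ 2) := h ▸ hs.pow.sub_even ((he.pow_of_ne_zero four_ne_zero).mul_left 3)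
    exact (Int.odd_pow.1 this).resolve_right two_ne_zero
  have hst : IsCoprime (s ^ 2) t := by
    have h4 : IsCoprime (s ^ 4) (3 * e ^ 4) :=
      (hcop.of_mul_left_left.mul_left hcop.of_mul_left_right.pow_left).pow_right.symm
    rw [show 3 * e ^ 4 = -t ^ 2 + s ^ 4 * 1 by linear_combination -h,
      IsCoprime.add_mul_left_right_iff, IsCoprime.neg_right_iff,
      show s ^ 4 = (s ^ 2) ^ 2 by ring] at h4
    exact (IsCoprime.pow_right_iff two_pos).1 ((IsCoprime.pow_left_iff two_pos).1 h4)
  obtain ⟨u, hu⟩ := (hs.pow (n := 2)).sub_odd ht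
  obtain ⟨f, rfl⟩ := he
  have huv : IsCoprime u (s ^ 2 - u) :=
    .of_add_sub (by rwa [add_sub_cancel, show s ^ 2 - u - u = t by linarith])
  have hprod : u * (s ^ 2 - u) = 12 * f ^ 4 := by
    have : 4 * (u * (s ^ 2 - u)) = 4 * (12 * f ^ 4) := by
      linear_combination h - (t + s ^ 2 - 2 * u) * hu
    linarith
  have hs0 : s ≠ 0 := by rintro rfl; simp at hs
  obtain ⟨hu0, hv0⟩ := nonneg_and_nonneg_of_mul_nonneg_of_add_pos (a := u) (b := s ^ 2 - u)
    (by rw [hprod]; positivity) (by rw [add_sub_cancel]; positivity)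
  obtain ⟨G, H, hGH, hsG, hHf⟩ :=
    exists_pow_four_add_twelve_mul_pow_four_eq_sq_of_mul_eq huv hu0 hv0 hs (by ring) hprod
  exact ⟨G, H, hGH, hsG, hs, by rw [← two_mul]; exact mul_dvd_mul_left 2 hHf⟩

theorem exists_pow_four_sub_three_mul_pow_four_eq_sq {s G H : ℤ} (h : G ^ 4 + 12 * H ^ 4 = s ^ 2)
    (hsG : IsCoprime s G) (hs : Odd s) :
    ∃ s' e' t', IsCoprime (3 * e') s' ∧ s' ^ 4 - 3 * e' ^ 4 = t' ^ 2 ∧ e' ∣ H := by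
  wlog hs0 : 0 < s generalizing s
  · have hs0' : s ≠ 0 := by rintro rfl; simp at hs
    exact this (by rw [h, neg_sq]) hsG.neg_left hs.neg (by omega)
  have hG : Odd G := by
    have : Odd (G ^ 4) := eq_sub_of_add_eq h ▸ hs.pow.sub_even ⟨6 * H ^ 4, by ring⟩
    exact (Int.odd_pow.1 this).resolve_right four_ne_zero
  obtain ⟨P, hP⟩ := hs.sub_odd (hG.pow (n := 2))
  have hPQ : IsCoprime P (s - P) :=
    .of_add_sub (by rw [add_sub_cancel, show s - P - P = G ^ 2 by linarith]; exact hsG.pow_right)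
  have hprod : P * (s - P) = 3 * H ^ 4 := by
    have : 4 * (P * (s - P)) = 4 * (3 * H ^ 4) := by
      linear_combination -h - (s + G ^ 2 - 2 * P) * hP
    linarith
  obtain ⟨hP0, hQ0⟩ := nonneg_and_nonneg_of_mul_nonneg_of_add_pos (a := P) (b := s - P)
    (by rw [hprod]; positivity) (by rwa [add_sub_cancel])
  rcases Int.prime_three.dvd_or_dvd ⟨H ^ 4, hprod⟩ with h3 | h3
  · obtain ⟨i, j, hi, hj, hiH⟩ :=
      Int.exists_eq_three_mul_pow_four_of_mul_eq hPQ hP0 hQ0 hprod h3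
    rw [hj, hi] at hPQ
    refine ⟨j, i, G, ?_, by linarith, hiH⟩
    exact ((IsCoprime.pow_right_iff four_pos).1 hPQ.of_mul_left_left).mul_left
      ((IsCoprime.pow_iff four_pos four_pos).1 hPQ.of_mul_left_right)
  · obtain ⟨i, j, hi, hj, -⟩ := Int.exists_eq_three_mul_pow_four_of_mul_eq hPQ.symm hQ0 hP0
      (by rw [mul_comm, hprod]) h3
    exact (Int.three_mul_pow_four_sub_pow_four_ne_sq_of_odd (i := i) (j := j) hG
      (by linarith)).elim

theorem eq_zero_of_pow_four_sub_three_mul_pow_four_eq_sq {s e t : ℤ}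
    (hcop : IsCoprime (3 * e) s) (h : s ^ 4 - 3 * e ^ 4 = t ^ 2) : e = 0 := by
  induction hn : e.natAbs using Nat.strong_induction_on generalizing s e t with
  | _ n ih =>
  by_contra he
  obtain ⟨G, H, hGH, hsG, hs, hHe⟩ := exists_pow_four_add_twelve_mul_pow_four_eq_sq hcop h
  obtain ⟨s', e', t', hcop', h', he'H⟩ :=
    exists_pow_four_sub_three_mul_pow_four_eq_sq hGH hsG hs
  have hH : H ≠ 0 := by rintro rfl; exact he (zero_dvd_iff.1 (by simpa using hHe))
  have he' : e' ≠ 0 := by rintro rfl; exact hH (zero_dvd_iff.1 he'H)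
  have hlt : e'.natAbs < n := by
    have h1 := Int.natAbs_le_of_dvd_ne_zero he'H hH
    have h2 : 2 * H.natAbs ≤ e.natAbs := by
      simpa [Int.natAbs_mul] using Int.natAbs_le_of_dvd_ne_zero hHe he
    have h3 := Int.natAbs_pos.2 hH
    omega
  exact he' (ih _ hlt hcop' h' rfl)

theorem eq_zero_of_mul_mul_sq_sub_three_mul_sq_eq_sq_of_not_dvd {a b n : ℤ} (hab : IsCoprime a b)
    (ha : ¬ 3 ∣ a) (h : a * b * (a ^ 2 - 3 * b ^ 2) = n ^ 2) : b = 0 := by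
  have hac : IsCoprime a (a ^ 2 - 3 * b ^ 2) := by
    have := ((Int.prime_three.coprime_iff_not_dvd.2 ha).symm.mul_right
      (hab.pow_right (n := 2))).neg_right.add_mul_left_right a
    rwa [show -(3 * b ^ 2) + a * a = a ^ 2 - 3 * b ^ 2 by ring] at this
  have hbc : IsCoprime b (a ^ 2 - 3 * b ^ 2) := by
    have := (hab.symm.pow_right (n := 2)).add_mul_left_right (-3 * b)
    rwa [show a ^ 2 + b * (-3 * b) = a ^ 2 - 3 * b ^ 2 by ring] at this
  obtain ⟨α, hα⟩ := Int.sq_of_isCoprime (hab.mul_right hac) (by rw [← h]; ring)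
  obtain ⟨β, hβ⟩ := Int.sq_of_isCoprime (hab.symm.mul_right hbc) (by rw [← h]; ring)
  obtain ⟨γ, hγ⟩ := Int.sq_of_isCoprime (hac.symm.mul_right hbc.symm) (by rw [← h]; ring)
  have ha2 : a ^ 2 = α ^ 4 := by rcases hα with rfl | rfl <;> ring
  have hb2 : b ^ 2 = β ^ 4 := by rcases hβ with rfl | rfl <;> ring
  have hαβ : IsCoprime α β := by
    have := hab.pow (m := 2) (n := 2)
    rwa [ha2, hb2, IsCoprime.pow_iff four_pos four_pos] at this
  have hα3 : ¬ 3 ∣ α := fun h3 =>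
    ha (Int.prime_three.dvd_of_dvd_pow (n := 2) (ha2 ▸ dvd_pow h3 four_ne_zero))
  rcases hγ with hγ | hγ
  · have hβ0 : β = 0 := eq_zero_of_pow_four_sub_three_mul_pow_four_eq_sq
      ((Int.prime_three.coprime_iff_not_dvd.2 hα3).mul_left hαβ.symm)
      (by rw [← ha2, ← hb2, hγ])
    simpa [hβ0] using hb2
  · exact (Int.pow_four_add_sq_ne_three_mul_pow_four (y := γ) (z := β) hα3 (by linarith)).elim

theorem eq_zero_of_mul_mul_sq_sub_three_mul_sq_eq_sq {a b n : ℤ} (hab : IsCoprime a b)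
    (h : a * b * (a ^ 2 - 3 * b ^ 2) = n ^ 2) : n = 0 := by
  by_cases ha : 3 ∣ a
  · obtain ⟨c, rfl⟩ := ha
    have hb : ¬ 3 ∣ b := fun hb =>
      Int.prime_three.not_isUnit (hab.isUnit_of_dvd' (dvd_mul_right 3 c) hb)
    -- with `a = 3c` and `n = 3m` the equation reads `(-b) c ((-b)² - 3c²) = m²`
    obtain ⟨m, rfl⟩ : 3 ∣ n :=
      Int.prime_three.dvd_of_dvd_pow (n := 2)
        ⟨3 * c * b * (3 * c ^ 2 - b ^ 2), by rw [← h]; ring⟩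
    have hc : c = 0 := eq_zero_of_mul_mul_sq_sub_three_mul_sq_eq_sq_of_not_dvd
      hab.of_mul_left_right.symm.neg_left (by rwa [Int.dvd_neg]) (by linarith)
    subst hc
    exact pow_eq_zero_iff two_ne_zero |>.1 (h.symm.trans (by ring))
  · have hb := eq_zero_of_mul_mul_sq_sub_three_mul_sq_eq_sq_of_not_dvd hab ha h
    subst hb
    exact pow_eq_zero_iff two_ne_zero |>.1 (h.symm.trans (by ring))

theorem Rat.eq_zero_of_sq_eq_cube_sub_three_mul {x y : ℚ} (h : y ^ 2 = x ^ 3 - 3 * x) :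
    y = 0 := by
  have hb : (x.den : ℚ) ≠ 0 := by positivity
  have key : (y * x.den ^ 2) ^ 2 =
      ((x.num * x.den * (x.num ^ 2 - 3 * x.den ^ 2) : ℤ) : ℚ) := by
    push_cast
    rw [← Rat.num_div_den x] at h
    field_simp at h
    linear_combination (x.den : ℚ) * h
  obtain ⟨n, hn⟩ := Rat.isSquare_intCast_iff.1 ⟨_, key.symm.trans (sq _)⟩
  have hn0 := eq_zero_of_mul_mul_sq_sub_three_mul_sq_eq_sq (Rat.isCoprime_num_den x)
    (hn.trans (sq n).symm)
  rw [hn, hn0, mul_zero, Int.cast_zero] at key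
  simpa [hb] using key

/-- For every nonzero rational number `c`, the polynomial `X³ - 3X - c²` is
irreducible over `ℚ`. -/
theorem irreducible_X_cubed_sub_three_X_sub_sq (c : ℚ) (hc : c ≠ 0) :
    Irreducible (X ^ 3 - 3 * X - C (c ^ 2) : Polynomial ℚ) := by
  have hdeg : (X ^ 3 - 3 * X - C (c ^ 2) : Polynomial ℚ).natDegree = 3 := by
    compute_degree!
  refine irreducible_of_degree_le_three_of_not_isRoot (by rw [hdeg]; decide) fun x hx => hc ?_
  refine Rat.eq_zero_of_sq_eq_cube_sub_three_mul (x := x) ?_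
  simp only [IsRoot, eval_sub, eval_pow, eval_mul, eval_X, eval_C, eval_ofNat] at hx
  linarith
end

section
/- Let r and s be nonzero integers that are relatively prime to each other and such that neither r nor s is divisible by 3. Then the polynomial X³ − 3X − (3r/s) is irreducible over ℚ. -/
/-!
An Eisenstein-type argument at a prime `p` (here `3`), run on a putative rational root
`n / d` in lowest terms: clearing denominators gives `s n³ = p (s n d² + r d³)`, so `p ∣ n`;
substituting `n = p m` and cancelling one `p` leaves `r d³ ≡ 0 (mod p)`, so `p ∣ d` as well.
A cubic without rational roots is irreducible over `ℚ`.
-/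

open Polynomial

theorem Prime.cubic_form_ne_zero_of_isCoprime {p r s n d : ℤ} (hp : Prime p) (hr : ¬ p ∣ r)
    (hs : ¬ p ∣ s) (hnd : IsCoprime n d) :
    s * n ^ 3 - p * s * n * d ^ 2 - p * r * d ^ 3 ≠ 0 := by
  intro h
  have hpn : p ∣ n := by
    have : p ∣ s * n ^ 3 := ⟨s * n * d ^ 2 + r * d ^ 3, by linear_combination h⟩
    exact hp.dvd_of_dvd_pow ((hp.dvd_mul.mp this).resolve_left hs)
  obtain ⟨m, rfl⟩ := hpn
  have hpd : p ∣ d := by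
    have : p * (r * d ^ 3) = p * (p * (p * s * m ^ 3 - s * m * d ^ 2)) := by
      linear_combination -h
    have : p ∣ r * d ^ 3 := ⟨_, mul_left_cancel₀ hp.ne_zero this⟩
    exact hp.dvd_of_dvd_pow ((hp.dvd_mul.mp this).resolve_left hr)
  exact hp.not_isUnit (hnd.isUnit_of_dvd' (dvd_mul_right p m) hpd)

theorem Prime.rat_cube_sub_mul_ne_div {p r s : ℤ} (hp : Prime p) (hr : ¬ p ∣ r)
    (hs : ¬ p ∣ s) (q : ℚ) :
    q ^ 3 - p * q ≠ p * r / s := by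
  intro h
  have hs0 : (s : ℚ) ≠ 0 := Int.cast_ne_zero.mpr (fun h0 => hs (h0 ▸ dvd_zero p))
  have hd0 : (q.den : ℚ) ≠ 0 := Nat.cast_ne_zero.mpr q.den_nz
  apply hp.cubic_form_ne_zero_of_isCoprime hr hs q.isCoprime_num_den
  rw [← Rat.num_div_den q] at h
  field_simp at h
  exact_mod_cast (by linear_combination h :
    (s * q.num ^ 3 - p * s * q.num * (q.den : ℤ) ^ 2 - p * r * (q.den : ℤ) ^ 3 : ℚ) = 0)

theorem Prime.irreducible_X_pow_three_sub_C_mul_X_sub_C {p r s : ℤ} (hp : Prime p)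
    (hr : ¬ p ∣ r) (hs : ¬ p ∣ s) :
    Irreducible (X ^ 3 - C (p : ℚ) * X - C ((p * r : ℚ) / s)) := by
  refine irreducible_of_degree_le_three_of_not_isRoot ?_ fun q hq => ?_
  · have : (X ^ 3 - C (p : ℚ) * X - C ((p * r : ℚ) / s)).natDegree = 3 := by compute_degree!
    rw [this]; decide
  · exact hp.rat_cube_sub_mul_ne_div hr hs q (by simpa [sub_eq_zero] using hq)

theorem irreducible_X_cubed_sub_three_X_sub_three_r_div_s_general
    (r s : ℤ)
    (hr3 : ¬ (3 : ℤ) ∣ r) (hs3 : ¬ (3 : ℤ) ∣ s) :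
    Irreducible (X ^ 3 - 3 * X - C ((3 * r : ℚ) / (s : ℚ)) : Polynomial ℚ) := by
  simpa [← C_ofNat] using Int.prime_three.irreducible_X_pow_three_sub_C_mul_X_sub_C hr3 hs3

/-- If `r` and `s` are nonzero integers, relatively prime to each other, and neither is
divisible by `3`, then `X³ - 3X - 3r/s` is irreducible over `ℚ`. -/
theorem irreducible_X_cubed_sub_three_X_sub_three_r_div_s
    (r s : ℤ) (hr : r ≠ 0) (hs : s ≠ 0) (hrs : IsCoprime r s)
    (hr3 : ¬ (3 : ℤ) ∣ r) (hs3 : ¬ (3 : ℤ) ∣ s) :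
    Irreducible (X ^ 3 - 3 * X - C ((3 * r : ℚ) / (s : ℚ)) : Polynomial ℚ) :=
  irreducible_X_cubed_sub_three_X_sub_three_r_div_s_general r s hr3 hs3
end

section
/- Let K be a field and F a finite field extension of K whose degree [F : K] is relatively prime to 6 (i.e., divisible by neither 2 nor 3). Then for every b ∈ F, the intermediate fields satisfy K(b³ − 3b) = K(b). -/
/-! Put `E = K(a)` with `a = b³ - 3b`. Over `E`, `b` is a root of the cubic `X³ - 3X - a`, so
`[E(b) : E] ≤ 3`; but `[E(b) : E]` divides `[F : K]`, which is prime to `2` and `3`, so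
`[E(b) : E] = 1` and `b ∈ E`. -/

open Polynomial IntermediateField

theorem Nat.eq_one_of_pos_of_le_three_of_coprime_six {d : ℕ} (hpos : 0 < d) (hle : d ≤ 3)
    (hd : d.Coprime 6) : d = 1 := by
  interval_cases d <;> revert hd <;> decide

theorem IntermediateField.mem_of_aeval_eq_zero_of_natDegree_le_three {K F : Type*} [Field K]
    [Field F] [Algebra K F] [FiniteDimensional K F] (h : (Module.finrank K F).Coprime 6)
    (E : IntermediateField K F) {p : E[X]} (hp : p ≠ 0) (hdeg : p.natDegree ≤ 3) {x : F}
    (hx : aeval x p = 0) : x ∈ E := by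
  have hint : IsIntegral E x := IsAlgebraic.isIntegral ⟨p, hp, hx⟩
  have hdvd : (minpoly E x).natDegree ∣ Module.finrank K F :=
    (minpoly.degree_dvd hint).trans (Module.finrank_dvd_finrank_left K E F)
  have hone : (minpoly E x).natDegree = 1 :=
    Nat.eq_one_of_pos_of_le_three_of_coprime_six (minpoly.natDegree_pos hint)
      ((natDegree_le_of_dvd (minpoly.dvd E x hx) hp).trans hdeg) (h.coprime_dvd_left hdvd)
  obtain ⟨y, rfl⟩ := minpoly.natDegree_eq_one_iff.mp hone
  exact y.2

/-- If `F/K` is a finite field extension of degree relatively prime to `6`, then for every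
`b ∈ F` we have `K(b³ - 3b) = K(b)`. -/
theorem adjoin_cube_sub_three_eq_adjoin
    (K F : Type*) [Field K] [Field F] [Algebra K F] [FiniteDimensional K F]
    (h : (Module.finrank K F).Coprime 6) (b : F) :
    IntermediateField.adjoin K {b ^ 3 - 3 * b} = IntermediateField.adjoin K {b} := by
  set E := IntermediateField.adjoin K {b ^ 3 - 3 * b}
  let a : E := ⟨b ^ 3 - 3 * b, mem_adjoin_simple_self K _⟩
  refine le_antisymm (adjoin_simple_le_iff.mpr ?_) (adjoin_simple_le_iff.mpr ?_)
  · have hb := mem_adjoin_simple_self K b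
    exact sub_mem (pow_mem hb 3) (mul_mem (_root_.natCast_mem _ 3) hb)
  · have hdeg : (X ^ 3 - 3 * X - C a).natDegree = 3 := by compute_degree!
    refine mem_of_aeval_eq_zero_of_natDegree_le_three h E
      (ne_zero_of_natDegree_gt (n := 0) (by omega)) hdeg.le ?_
    simp [a, map_ofNat]
end

section
/- Let K be a subfield of ℝ that is finite-dimensional over ℚ, and let m be an odd positive integer. Then there exists a subfield F of ℝ containing K with [F : K] = m. -/
/-!
Take a prime `ℓ` that has no `p`-th root in `K` for any prime `p ∣ m`. Then `X ^ m - ℓ` is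
irreducible over `K` (Kummer theory, `m` odd), so adjoining the real `m`-th root of `ℓ` to `K`
gives an extension of degree `m`.

Such an `ℓ` exists because, for each prime `p`, only finitely many primes have a `p`-th root in
`K`: `K` has finitely many subfields, and distinct primes `ℓ ≠ ℓ'` cannot have `p`-th roots
generating the same subfield. Indeed, if `y ^ p = ℓ'` and `y ∈ ℚ(x)` with `x ^ p = ℓ`, then every
`y * x ^ i` is a root of `X ^ p - ℓ' * ℓ ^ i`, which is irreducible by an `ℓ'`-adic valuation
count, so `y * x ^ i` has trace zero; as the `x ^ i` span `ℚ(x)` and the trace form is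
nondegenerate, `y = 0`.
-/

open Polynomial IntermediateField

theorem Polynomial.nextCoeff_X_pow_sub_C {F : Type*} [Field F] {n : ℕ} (hn : 2 ≤ n) (c : F) :
    (X ^ n - C c).nextCoeff = 0 := by
  rw [nextCoeff_of_natDegree_pos (by rw [natDegree_X_pow_sub_C]; omega),
    natDegree_X_pow_sub_C, coeff_sub, coeff_X_pow, coeff_C,
    if_neg (by omega), if_neg (by omega), sub_zero]

theorem Algebra.trace_eq_zero_of_pow_eq {F E : Type*} [Field F] [Field E] [Algebra F E]
    [FiniteDimensional F E] {p : ℕ} (hp : p.Prime) {c : F} (hc : ∀ b : F, b ^ p ≠ c) {y : E}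
    (hy : y ^ p = algebraMap F E c) : Algebra.trace F E y = 0 := by
  have hmin : minpoly F y = X ^ p - C c :=
    (minpoly.eq_of_irreducible_of_monic (X_pow_sub_C_irreducible_of_prime hp hc)
      (by simp [hy]) (monic_X_pow_sub_C c hp.ne_zero)).symm
  rw [trace_eq_finrank_mul_minpoly_nextCoeff, hmin, nextCoeff_X_pow_sub_C hp.two_le,
    neg_zero, mul_zero]

theorem notMem_adjoin_simple_of_pow_eq {F E : Type*} [Field F] [CharZero F] [Field E]
    [Algebra F E] {p : ℕ} (hp : p.Prime) {a c : F} (hac : ∀ (i : ℕ) (b : F), b ^ p ≠ c * a ^ i)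
    {x y : E} (hx : x ^ p = algebraMap F E a) (hy : y ^ p = algebraMap F E c) : y ∉ F⟮x⟯ := by
  intro hyx
  have hxint : IsIntegral F x := ⟨X ^ p - C a, monic_X_pow_sub_C a hp.ne_zero, by simp [hx]⟩
  let pb := adjoin.powerBasis hxint
  have : FiniteDimensional F F⟮x⟯ := pb.finite
  let y' : F⟮x⟯ := ⟨y, hyx⟩
  have htrace : Algebra.traceForm F F⟮x⟯ y' = 0 := pb.basis.ext fun i ↦ by
    rw [PowerBasis.coe_basis, Algebra.traceForm_apply, LinearMap.zero_apply]
    refine Algebra.trace_eq_zero_of_pow_eq hp (hac i) (Subtype.ext ?_)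
    simp [y', pb, mul_pow, hy, pow_right_comm x _ p, hx]
  have hy' : y' = 0 := (traceForm_nondegenerate F F⟮x⟯).1 y' (LinearMap.congr_fun htrace)
  have hc : c = 0 := (map_eq_zero (algebraMap F E)).mp <| by
    rw [← hy, show y = 0 from congrArg Subtype.val hy', zero_pow hp.ne_zero]
  exact hac 0 0 (by rw [hc, zero_pow hp.ne_zero, zero_mul])

theorem pow_ne_prime_mul_pow {p ℓ ℓ' : ℕ} (hp : 1 < p) (hℓ : ℓ.Prime) (hℓ' : ℓ'.Prime)
    (hne : ℓ ≠ ℓ') (i : ℕ) (b : ℚ) : b ^ p ≠ ℓ' * ℓ ^ i := by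
  have : Fact ℓ'.Prime := ⟨hℓ'⟩
  have hℓ0 : (ℓ : ℚ) ≠ 0 := by exact_mod_cast hℓ.ne_zero
  have hℓ'0 : (ℓ' : ℚ) ≠ 0 := by exact_mod_cast hℓ'.ne_zero
  intro hb
  have hv := congrArg (padicValRat ℓ') hb
  rw [padicValRat.pow b, padicValRat.mul hℓ'0 (pow_ne_zero _ hℓ0), padicValRat.pow (ℓ : ℚ),
    padicValRat.self hℓ'.one_lt, padicValRat.of_nat,
    padicValNat.eq_zero_of_not_dvd fun h ↦ hne ((Nat.prime_dvd_prime_iff_eq hℓ' hℓ).mp h).symm,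
    Nat.cast_zero, mul_zero, add_zero] at hv
  have hdvd : (p : ℤ) ∣ 1 := ⟨_, hv.symm⟩
  have := Int.eq_one_of_dvd_one (by positivity) hdvd
  omega

theorem finite_setOf_prime_exists_pow_eq (E : Type*) [Field E] [Algebra ℚ E]
    [FiniteDimensional ℚ E] {p : ℕ} (hp : p.Prime) :
    {ℓ : ℕ | ℓ.Prime ∧ ∃ b : E, b ^ p = ℓ}.Finite := by
  have : Finite (IntermediateField ℚ E) :=
    Field.finite_intermediateField_of_exists_primitive_element ℚ E
      (Field.exists_primitive_element ℚ E)
  let root (ℓ : {ℓ : ℕ | ℓ.Prime ∧ ∃ b : E, b ^ p = ℓ}) : E := ℓ.2.2.choose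
  have hroot ℓ : root ℓ ^ p = algebraMap ℚ E ℓ.1 := by simpa using ℓ.2.2.choose_spec
  refine Set.finite_coe_iff.mp (Finite.of_injective (fun ℓ ↦ ℚ⟮root ℓ⟯) fun ℓ ℓ' hadj ↦ ?_)
  by_contra hne
  refine notMem_adjoin_simple_of_pow_eq hp
    (pow_ne_prime_mul_pow hp.one_lt ℓ.2.1 ℓ'.2.1 fun h ↦ hne (Subtype.ext h))
    (hroot ℓ) (hroot ℓ') ?_
  rw [show ℚ⟮root ℓ⟯ = ℚ⟮root ℓ'⟯ from hadj]
  exact mem_adjoin_simple_self ℚ (root ℓ')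

theorem exists_irreducible_X_pow_sub_natCast (E : Type*) [Field E] [Algebra ℚ E]
    [FiniteDimensional ℚ E] {m : ℕ} (hm : Odd m) : ∃ ℓ : ℕ, Irreducible (X ^ m - C (ℓ : E)) := by
  have hbad : (⋃ p ∈ m.primeFactors, {ℓ : ℕ | ℓ.Prime ∧ ∃ b : E, b ^ p = ℓ}).Finite :=
    m.primeFactors.finite_toSet.biUnion fun p hp ↦
      finite_setOf_prime_exists_pow_eq E (Nat.prime_of_mem_primeFactors hp)
  obtain ⟨ℓ, hℓ, hℓbad⟩ := (Nat.infinite_setOfPred_prime.sdiff hbad).nonempty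
  refine ⟨ℓ, X_pow_sub_C_irreducible_of_odd hm fun p hp hpm b hb ↦ hℓbad ?_⟩
  exact Set.mem_biUnion (Nat.mem_primeFactors.mpr ⟨hp, hpm, hm.pos.ne'⟩) ⟨hℓ, b, hb⟩

theorem exists_real_extension_of_odd_degree_general
    (K : Subfield ℝ) (hK : FiniteDimensional ℚ K) (m : ℕ) (hodd : Odd m) :
    ∃ (F : Subfield ℝ) (h : K ≤ F),
      (letI : Algebra K F := (Subfield.inclusion h).toAlgebra;
        Module.finrank K F) = m := by
  obtain ⟨ℓ, hirr⟩ := exists_irreducible_X_pow_sub_natCast K hodd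
  set α : ℝ := (ℓ : ℝ) ^ (m : ℝ)⁻¹
  have hmonic : (X ^ m - C (ℓ : K)).Monic := monic_X_pow_sub_C _ hodd.pos.ne'
  have hα : aeval α (X ^ m - C (ℓ : K)) = 0 := by
    simp [α, Real.rpow_inv_natCast_pow (Nat.cast_nonneg ℓ) hodd.pos.ne']
  have hmin : minpoly K α = X ^ m - C (ℓ : K) :=
    (minpoly.eq_of_irreducible_of_monic hirr hα hmonic).symm
  refine ⟨K⟮α⟯.toSubfield, fun x hx ↦ K⟮α⟯.algebraMap_mem ⟨x, hx⟩, ?_⟩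
  rw [← natDegree_X_pow_sub_C (n := m) (r := (ℓ : K)), ← hmin,
    ← adjoin.finrank ⟨_, hmonic, hα⟩]
  -- the `K`-module `K⟮α⟯.toSubfield` built from the inclusion is `K⟮α⟯` itself
  rfl

/-- For any subfield `K` of `ℝ` that is finite-dimensional over `ℚ` and any odd positive
integer `m`, there is a subfield `F` of `ℝ` containing `K` with `[F : K] = m`. -/
theorem exists_real_extension_of_odd_degree
    (K : Subfield ℝ) (hK : FiniteDimensional ℚ K) (m : ℕ) (hm : 0 < m) (hodd : Odd m) :
    ∃ (F : Subfield ℝ) (h : K ≤ F),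
      (letI : Algebra K F := (Subfield.inclusion h).toAlgebra;
        Module.finrank K F) = m :=
  exists_real_extension_of_odd_degree_general K hK m hodd
end

section
/- Let k ≥ 1 and let x = (x₁,…,x_k) and y = (y₁,…,y_k) be k-tuples of real numbers such that xᵢ ≥ 1 for all i and |xᵢ − yᵢ| ≤ 1 for all i. Then |x₁⋯x_k − y₁⋯y_k| ≤ (2^k − 1) · (x₁⋯x_k) / min{x₁,…,x_k}. -/
private lemma convex_aux {ι : Type*} [DecidableEq ι] (x : ι → ℝ) (hx : ∀ i, 1 ≤ x i)
    (s : Finset ι) :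
    2 * ∏ i ∈ s, x i ≤ (∏ i ∈ s, (x i + 1)) + ∏ i ∈ s, (x i - 1) := by
  induction s using Finset.induction_on with
  | empty => simp; norm_num
  | @insert j s hj ih =>
    rw [Finset.prod_insert hj, Finset.prod_insert hj, Finset.prod_insert hj]
    set A := ∏ i ∈ s, (x i + 1) with hA
    set B := ∏ i ∈ s, (x i - 1) with hB
    set P := ∏ i ∈ s, x i with hP
    have hB0 : 0 ≤ B := Finset.prod_nonneg fun i _ => by linarith [hx i]
    have hBP : B ≤ P := Finset.prod_le_prod (fun i _ => by linarith [hx i])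
      (fun i _ => by linarith [hx i])
    have hPA : P ≤ A := Finset.prod_le_prod (fun i _ => by linarith [hx i])
      (fun i _ => by linarith [hx i])
    have hxj := hx j
    nlinarith [ih, hx j]

/-- If `x₁, …, x_k` are reals `≥ 1` and `|xᵢ - yᵢ| ≤ 1` for all `i`, then
`|x₁⋯x_k - y₁⋯y_k| ≤ (2^k - 1) · (x₁⋯x_k) / min xᵢ`. -/
theorem abs_prod_sub_prod_le
    (k : ℕ) (hk : 1 ≤ k) (x y : Fin k → ℝ)
    (hx : ∀ i, 1 ≤ x i) (hxy : ∀ i, |x i - y i| ≤ 1) :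
    |(∏ i, x i) - ∏ i, y i| ≤
      ((2 : ℝ) ^ k - 1) * (∏ i, x i) /
        Finset.univ.inf' (Finset.univ_nonempty_iff.mpr (Fin.pos_iff_nonempty.mp hk)) x := by
  have hne : (Finset.univ : Finset (Fin k)).Nonempty :=
    Finset.univ_nonempty_iff.mpr (Fin.pos_iff_nonempty.mp hk)
  set m := Finset.univ.inf' hne x with hm
  have hm1 : 1 ≤ m := by
    obtain ⟨j, _, hj⟩ := Finset.exists_mem_eq_inf' hne x
    rw [hm, hj]; exact hx j
  have hm0 : 0 < m := by linarith
  set P := ∏ i, x i with hP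
  set A := ∏ i, (x i + 1) with hAdef
  have hP0 : 0 ≤ P := Finset.prod_nonneg fun i _ => by linarith [hx i]
  -- bounds on ∏ y
  have hyub : ∏ i, y i ≤ A :=
    Finset.prod_le_prod (fun i _ => by have := abs_le.mp (hxy i); linarith [hx i])
      (fun i _ => by have := abs_le.mp (hxy i); linarith)
  have hylb : (∏ i, (x i - 1)) ≤ ∏ i, y i :=
    Finset.prod_le_prod (fun i _ => by linarith [hx i])
      (fun i _ => by have := abs_le.mp (hxy i); linarith)
  have hconv : 2 * P ≤ A + ∏ i, (x i - 1) := convex_aux x hx Finset.univ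
  have hPA : P ≤ A := Finset.prod_le_prod (fun i _ => by linarith [hx i])
      (fun i _ => by linarith)
  have habs : |P - ∏ i, y i| ≤ A - P := by
    rw [abs_le]; constructor <;> nlinarith
  refine habs.trans ?_
  -- expand A as sum over subsets
  have hexp : A = ∑ t ∈ (Finset.univ : Finset (Fin k)).powerset,
      (∏ i ∈ t, x i) * ∏ i ∈ Finset.univ \ t, (1 : ℝ) := by
    rw [hAdef, Finset.prod_add]
  have hexp' : A = ∑ t ∈ (Finset.univ : Finset (Fin k)).powerset, ∏ i ∈ t, x i := by
    rw [hexp]; apply Finset.sum_congr rfl; intro t _; rw [Finset.prod_const_one, mul_one]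
  have hmem : (Finset.univ : Finset (Fin k)) ∈ (Finset.univ : Finset (Fin k)).powerset :=
    Finset.mem_powerset_self _
  have hsplit : A = (∑ t ∈ ((Finset.univ : Finset (Fin k)).powerset).erase Finset.univ,
      ∏ i ∈ t, x i) + P := by
    rw [hexp', ← Finset.sum_erase_add _ _ hmem]
  -- each proper-subset term is ≤ P / m
  have hterm : ∀ t ∈ ((Finset.univ : Finset (Fin k)).powerset).erase Finset.univ,
      (∏ i ∈ t, x i) ≤ P / m := by
    intro t ht
    rw [Finset.mem_erase, Finset.mem_powerset] at ht
    obtain ⟨htne, _⟩ := ht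
    obtain ⟨j, hj⟩ : ∃ j, j ∉ t := by
      by_contra h; push_neg at h
      exact htne (Finset.eq_univ_iff_forall.mpr h)
    have hjc : j ∈ tᶜ := Finset.mem_compl.mpr hj
    have h1 : m ≤ x j := Finset.inf'_le x (Finset.mem_univ j)
    have h2 : x j ≤ ∏ i ∈ tᶜ, x i := by
      have h4 : ∏ i ∈ tᶜ.erase j, (1 : ℝ) ≤ ∏ i ∈ tᶜ.erase j, x i :=
        Finset.prod_le_prod (fun _ _ => zero_le_one) (fun i _ => hx i)
      rw [Finset.prod_const_one] at h4
      have h5 := Finset.mul_prod_erase tᶜ x hjc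
      nlinarith [hx j]
    have h3 : (∏ i ∈ t, x i) * m ≤ (∏ i ∈ t, x i) * ∏ i ∈ tᶜ, x i := by
      apply mul_le_mul_of_nonneg_left (by linarith)
        (Finset.prod_nonneg fun i _ => by linarith [hx i])
    rw [Finset.prod_mul_prod_compl t x] at h3
    rw [le_div_iff₀ hm0]
    exact h3
  have hcard : (((Finset.univ : Finset (Fin k)).powerset).erase Finset.univ).card
      = 2 ^ k - 1 := by
    rw [Finset.card_erase_of_mem hmem, Finset.card_powerset, Finset.card_univ,
      Fintype.card_fin]
  have hsum : (∑ t ∈ ((Finset.univ : Finset (Fin k)).powerset).erase Finset.univ,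
      ∏ i ∈ t, x i) ≤ ((2 : ℝ) ^ k - 1) * (P / m) := by
    calc (∑ t ∈ ((Finset.univ : Finset (Fin k)).powerset).erase Finset.univ, ∏ i ∈ t, x i)
        ≤ ∑ _t ∈ ((Finset.univ : Finset (Fin k)).powerset).erase Finset.univ, P / m :=
          Finset.sum_le_sum hterm
      _ = ((2 : ℝ) ^ k - 1) * (P / m) := by
          rw [Finset.sum_const, hcard, nsmul_eq_mul]
          congr 1
          push_cast [Nat.one_le_two_pow]
          ring
  calc A - P ≤ ((2 : ℝ) ^ k - 1) * (P / m) := by rw [hsplit]; linarith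
    _ = ((2 : ℝ) ^ k - 1) * P / m := by ring
end

section
/- Fix an integer k ≥ 2 and a real number E ≥ 1. Then card Q(k,n) is asymptotic to (n₁⋯n_k)/ζ(k) among tuples of bounded eccentricity: for every ε > 0 there exists M ≥ 1 such that for every k-tuple n = (n₁,…,n_k) of real numbers with nᵢ ≥ 1 for all i, max{n₁,…,n_k} ≤ E · min{n₁,…,n_k}, and min{n₁,…,n_k} ≥ M, one has |card Q(k,n) · ζ(k) / (n₁⋯n_k) − 1| ≤ ε. -/
/-- `Qset k n` is the set of `k`-tuples of positive integers `(a₁, …, a_k)` with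
`gcd(a₁, …, a_k) = 1` and `aᵢ ≤ nᵢ` for each `i`. -/
def Qset (k : ℕ) (n : Fin k → ℝ) : Set (Fin k → ℕ) :=
  {a | (∀ i, 0 < a i ∧ (a i : ℝ) ≤ n i) ∧ Finset.univ.gcd a = 1}

/-- The value `ζ(k)` of the Riemann zeta function at an integer `k ≥ 2`,
as the real series `∑ 1/mᵏ`. -/
noncomputable def zetaVal (k : ℕ) : ℝ := ∑' m : ℕ, 1 / (m + 1 : ℝ) ^ k

/-!
Möbius inversion over the common divisor of a tuple gives
`#Q(k,n) = ∑_d μ(d) ∏ᵢ ⌊nᵢ/d⌋`. After division by `∏ᵢ nᵢ`, the `d`-th term tends to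
`μ(d)/dᵏ` as all `nᵢ → ∞` and is bounded by `d⁻ᵏ`, which is summable for `k ≥ 2`, so by
Tannery's theorem the quotient tends to `∑_d μ(d)/dᵏ = 1/ζ(k)`.
-/

open Finset Filter Topology ArithmeticFunction
open scoped ArithmeticFunction.Moebius

section CoprimeTuples

variable {ι : Type*} [Fintype ι] [DecidableEq ι]

theorem card_filter_forall_dvd_piFinset_Ioc (N : ι → ℕ) (d : ℕ) :
    #{a ∈ Fintype.piFinset fun i => Ioc 0 (N i) | ∀ i, d ∣ a i} = ∏ i, N i / d := by
  have : {a ∈ Fintype.piFinset fun i => Ioc 0 (N i) | ∀ i, d ∣ a i}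
      = Fintype.piFinset fun i => {x ∈ Ioc 0 (N i) | d ∣ x} := by
    ext a
    simp only [mem_filter, Fintype.mem_piFinset, forall_and]
  simp [this, Nat.Ioc_filter_dvd_card_eq_div]

theorem sum_divisors_moebius (g : ℕ) : ∑ d ∈ g.divisors, μ d = if g = 1 then 1 else 0 := by
  simpa only [coe_mul_zeta_apply, one_apply] using
    congrArg (fun f : ArithmeticFunction ℤ => f g) moebius_mul_coe_zeta

theorem sum_Ioc_ite_dvd_moebius {g D : ℕ} (hg : 0 < g) (hgD : g ≤ D) :
    ∑ d ∈ Ioc 0 D, (if d ∣ g then μ d else 0) = if g = 1 then 1 else 0 := by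
  rw [← sum_divisors_moebius, ← sum_subset (s₁ := g.divisors)]
  · exact sum_congr rfl fun d hd => if_pos (Nat.dvd_of_mem_divisors hd)
  · intro d hd
    have hdg := Nat.dvd_of_mem_divisors hd
    exact mem_Ioc.2 ⟨Nat.pos_of_dvd_of_pos hdg hg, (Nat.le_of_dvd hg hdg).trans hgD⟩
  · intro d _ hd
    exact if_neg fun hdg => hd (Nat.mem_divisors.2 ⟨hdg, hg.ne'⟩)

theorem card_filter_gcd_eq_one_piFinset_Ioc (N : ι → ℕ) (i₀ : ι) :
    (#{a ∈ Fintype.piFinset fun i => Ioc 0 (N i) | univ.gcd a = 1} : ℤ)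
      = ∑ d ∈ Ioc 0 (N i₀), μ d * ((∏ i, N i / d : ℕ) : ℤ) := by
  rw [card_filter, Nat.cast_sum]
  calc ∑ a ∈ Fintype.piFinset (fun i => Ioc 0 (N i)), ((if univ.gcd a = 1 then 1 else 0 : ℕ) : ℤ)
      = ∑ a ∈ Fintype.piFinset (fun i => Ioc 0 (N i)),
          ∑ d ∈ Ioc 0 (N i₀), if d ∣ univ.gcd a then μ d else 0 := by
        refine sum_congr rfl fun a ha => ?_
        have ha₀ := mem_Ioc.1 (Fintype.mem_piFinset.1 ha i₀)
        have hdvd : univ.gcd a ∣ a i₀ := gcd_dvd (mem_univ i₀)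
        rw [sum_Ioc_ite_dvd_moebius (Nat.pos_of_dvd_of_pos hdvd ha₀.1)
          ((Nat.le_of_dvd ha₀.1 hdvd).trans ha₀.2)]
        split_ifs <;> rfl
    _ = ∑ d ∈ Ioc 0 (N i₀),
          μ d * #{a ∈ Fintype.piFinset fun i => Ioc 0 (N i) | ∀ i, d ∣ a i} := by
        rw [sum_comm]
        refine sum_congr rfl fun d _ => ?_
        simp only [Finset.dvd_gcd_iff, mem_univ, true_implies]
        rw [← sum_filter, sum_const, nsmul_eq_mul, mul_comm]
    _ = _ := by simp only [card_filter_forall_dvd_piFinset_Ioc]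

end CoprimeTuples

theorem Qset_eq_coe_filter_piFinset {k : ℕ} {n : Fin k → ℝ} (hn : ∀ i, 0 ≤ n i) :
    Qset k n = ↑{a ∈ Fintype.piFinset fun i => Ioc 0 ⌊n i⌋₊ | univ.gcd a = 1} := by
  ext a
  simp [Qset, Nat.le_floor_iff (hn _)]

-- The `d = 0` term of the series is `0` because `μ 0 = 0`.
theorem natCard_Qset_eq_tsum {k : ℕ} (hk : 0 < k) {n : Fin k → ℝ} (hn : ∀ i, 0 ≤ n i) :
    (Nat.card (Qset k n) : ℝ) = ∑' d : ℕ, (μ d : ℝ) * ∏ i, (⌊n i / d⌋₊ : ℝ) := by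
  let i₀ : Fin k := ⟨0, hk⟩
  rw [Qset_eq_coe_filter_piFinset hn, Finset.coe_sort_coe, Nat.card_eq_finsetCard,
    ← Int.cast_natCast, card_filter_gcd_eq_one_piFinset_Ioc _ i₀, tsum_eq_sum (s := Ioc 0 ⌊n i₀⌋₊)]
  · simp only [Int.cast_sum, Int.cast_mul, Nat.cast_prod, Int.cast_prod, Int.cast_natCast,
      Nat.floor_div_natCast]
  · intro d hd
    rcases Nat.eq_zero_or_pos d with rfl | hd₀
    · simp
    · refine mul_eq_zero_of_right _ (prod_eq_zero (mem_univ i₀) ?_)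
      rw [Nat.floor_div_natCast, Nat.cast_eq_zero, Nat.div_eq_zero_iff_lt hd₀]
      simpa [hd₀] using hd

-- Also true for `d = 0`, where `x / 0 = 0` and `0⁻¹ = 0`.
theorem tendsto_natFloor_div_natCast_div_atTop (d : ℕ) :
    Tendsto (fun x : ℝ => (⌊x / d⌋₊ : ℝ) / x) atTop (𝓝 (d : ℝ)⁻¹) := by
  rcases Nat.eq_zero_or_pos d with rfl | hd
  · simp
  have hd' : (0 : ℝ) < d := Nat.cast_pos.2 hd
  have := (tendsto_nat_floor_div_atTop.comp (tendsto_id.atTop_div_const hd')).mul_const (d : ℝ)⁻¹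
  rw [one_mul] at this
  refine this.congr fun x => ?_
  simp only [Function.comp_apply, id]
  field_simp

theorem natFloor_div_natCast_div_le (d : ℕ) {x : ℝ} (hx : 0 ≤ x) :
    (⌊x / d⌋₊ : ℝ) / x ≤ (d : ℝ)⁻¹ :=
  div_le_of_le_mul₀ hx (by positivity) <| by
    rw [inv_mul_eq_div]; exact Nat.floor_le (div_nonneg hx d.cast_nonneg)

theorem LSeries_ofReal_natCast_eq_tsum (f : ℕ → ℝ) {k : ℕ} (hk : k ≠ 0) :
    LSeries (fun n => (f n : ℂ)) k = ((∑' n : ℕ, f n / (n : ℝ) ^ k : ℝ) : ℂ) := by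
  rw [LSeries, Complex.ofReal_tsum]
  refine tsum_congr fun n => ?_
  rcases eq_or_ne n 0 with rfl | hn
  · simp [hk]
  · rw [LSeries.term_of_ne_zero hn, Complex.cpow_natCast]
    push_cast
    rfl

theorem zetaVal_mul_tsum_moebius_div_pow {k : ℕ} (hk : 2 ≤ k) :
    zetaVal k * ∑' d : ℕ, (μ d : ℝ) / (d : ℝ) ^ k = 1 := by
  have hre : 1 < (k : ℂ).re := by simp; omega
  have hk₀ : k ≠ 0 := by omega
  have hζ : zetaVal k = ∑' d : ℕ, 1 / (d : ℝ) ^ k := by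
    rw [zetaVal, (Real.summable_one_div_nat_pow.2 hk).tsum_eq_zero_add]
    simp [hk₀]
  have := LSeries_one_mul_Lseries_moebius hre
  rw [show (1 : ℕ → ℂ) = fun n => ((1 : ℝ) : ℂ) by ext; simp,
    show (fun n => (μ n : ℂ)) = fun n => ((μ n : ℝ) : ℂ) by ext; simp,
    LSeries_ofReal_natCast_eq_tsum _ hk₀, LSeries_ofReal_natCast_eq_tsum _ hk₀] at this
  rw [hζ]
  exact_mod_cast this

-- `atTop` on `Fin k → ℝ` (pointwise order) means that every coordinate tends to infinity.
theorem tendsto_natCard_Qset_div_prod {k : ℕ} (hk : 2 ≤ k) :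
    Tendsto (fun n : Fin k → ℝ => (Nat.card (Qset k n) : ℝ) / ∏ i, n i) atTop
      (𝓝 (∑' d : ℕ, (μ d : ℝ) / (d : ℝ) ^ k)) := by
  have hlim : Tendsto (fun n : Fin k → ℝ => ∑' d : ℕ, (μ d : ℝ) * ∏ i, (⌊n i / d⌋₊ : ℝ) / n i)
      atTop (𝓝 (∑' d : ℕ, (μ d : ℝ) / (d : ℝ) ^ k)) := by
    refine tendsto_tsum_of_dominated_convergence (bound := fun d : ℕ => ((d : ℝ) ^ k)⁻¹)
      (Real.summable_nat_pow_inv.2 hk) (fun d => ?_) ?_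
    · have hprod := tendsto_finsetProd (univ : Finset (Fin k)) fun i _ =>
        (tendsto_natFloor_div_natCast_div_atTop d).comp
          (tendsto_atTop_atTop_of_monotone (Function.monotone_eval i)
            fun x => ⟨fun _ => x, le_rfl⟩)
      simpa [div_eq_mul_inv] using hprod.const_mul (μ d : ℝ)
    · filter_upwards [eventually_ge_atTop 0] with n hn d
      rw [norm_mul, ← inv_pow, ← Fin.prod_const k, norm_prod]
      refine (mul_le_of_le_one_left (prod_nonneg fun _ _ => norm_nonneg _) ?_).trans
        (prod_le_prod (fun _ _ => norm_nonneg _) fun i _ => ?_)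
      · rw [Real.norm_eq_abs, ← Int.cast_abs]
        exact_mod_cast abs_moebius_le_one
      · rw [Real.norm_of_nonneg (div_nonneg (Nat.cast_nonneg _) (hn i))]
        exact natFloor_div_natCast_div_le d (hn i)
  refine hlim.congr' ?_
  filter_upwards [eventually_ge_atTop 0] with n hn
  rw [natCard_Qset_eq_tsum (by omega) hn, ← tsum_div_const]
  simp only [mul_div_assoc, prod_div_distrib]

theorem card_coprime_tuples_asymptotic_general
    (k : ℕ) (hk : 2 ≤ k) (E : ℝ) :
    ∀ ε : ℝ, 0 < ε → ∃ M : ℝ, 1 ≤ M ∧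
      ∀ n : Fin k → ℝ, (∀ i, 1 ≤ n i) → (∀ i j, n i ≤ E * n j) → (∀ i, M ≤ n i) →
        |(Nat.card (Qset k n) : ℝ) * zetaVal k / (∏ i, n i) - 1| ≤ ε := by
  intro ε hε
  have hlim : Tendsto (fun n : Fin k → ℝ => (Nat.card (Qset k n) : ℝ) * zetaVal k / ∏ i, n i)
      atTop (𝓝 1) := by
    rw [← zetaVal_mul_tsum_moebius_div_pow hk]
    refine ((tendsto_natCard_Qset_div_prod hk).const_mul (zetaVal k)).congr fun n => ?_
    ring
  obtain ⟨a, ha⟩ := eventually_atTop.1 (hlim.eventually (Metric.closedBall_mem_nhds 1 hε))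
  obtain ⟨M, hM⟩ := Finite.bddAbove_range a
  refine ⟨max 1 M, le_max_left _ _, fun n _ _ hn => ?_⟩
  exact ha n fun i => (hM ⟨i, rfl⟩).trans ((le_max_right _ _).trans (hn i))

/-- Among tuples of eccentricity at most `E`, `card Q(k,n)` is asymptotic to
`(n₁⋯n_k)/ζ(k)`. -/
theorem card_coprime_tuples_asymptotic
    (k : ℕ) (hk : 2 ≤ k) (E : ℝ) (hE : 1 ≤ E) :
    ∀ ε : ℝ, 0 < ε → ∃ M : ℝ, 1 ≤ M ∧
      ∀ n : Fin k → ℝ, (∀ i, 1 ≤ n i) → (∀ i j, n i ≤ E * n j) → (∀ i, M ≤ n i) →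
        |(Nat.card (Qset k n) : ℝ) * zetaVal k / (∏ i, n i) - 1| ≤ ε :=
  card_coprime_tuples_asymptotic_general k hk E
end

section
/- Let d be a squarefree positive integer and let a₁, a₂, b be integers with gcd(a₁, a₂, b) = 1. Set A₁ = a₁³ + 3d·a₁·a₂² − 3a₁·b², A₂ = 3a₁²·a₂ + d·a₂³ − 3a₂·b², and B = b³. Then the greatest common divisor G = gcd(A₁, A₂, B) divides 8d. -/
/-!
A prime `p` dividing `G` divides `b`, hence not both of `a₁, a₂`. Modulo `p` the `b`-terms vanish
and `(x, y) = (a₁, a₂)` is a nonzero zero of `x (x² + 3dy²)` and `y (3x² + dy²)`; when both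
brackets vanish their combination `3 (x² + 3dy²) - (3x² + dy²) = 8dy²` does too, so for odd `p`
we get `p ∣ d`. If moreover `p² ∣ G`, then `p ∣ a₁` and `p² ∣ d a₂³` with `p ∤ a₂`, contradicting
squarefreeness. For `p = 2`, `16 ∣ b³` forces `16 ∣ b²`, and a finite check modulo `16` shows
that `16 ∤ G`.
-/

theorem eq_zero_of_cubic_forms_eq_zero {R : Type*} [CommRing R] [IsDomain R] (h2 : (2 : R) ≠ 0)
    {d x y : R} (hxy : x ≠ 0 ∨ y ≠ 0) (h₁ : x ^ 3 + 3 * d * x * y ^ 2 = 0)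
    (h₂ : 3 * x ^ 2 * y + d * y ^ 3 = 0) : d = 0 := by
  rcases eq_or_ne y 0 with rfl | hy
  · have hx : x = 0 := by simpa using h₁
    simp [hx] at hxy
  rcases eq_or_ne x 0 with rfl | hx
  · simpa [hy] using h₂
  have e₁ : x ^ 2 + 3 * d * y ^ 2 = 0 :=
    (mul_eq_zero.mp (by linear_combination h₁ : x * (x ^ 2 + 3 * d * y ^ 2) = 0)).resolve_left hx
  have e₂ : 3 * x ^ 2 + d * y ^ 2 = 0 :=
    (mul_eq_zero.mp (by linear_combination h₂ : y * (3 * x ^ 2 + d * y ^ 2) = 0)).resolve_left hy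
  have : 2 ^ 3 * d * y ^ 2 = 0 := by linear_combination 3 * e₁ - e₂
  simpa [h2, hy] using this

theorem not_dvd_and_dvd_of_gcd_eq_one {a₁ a₂ b m : ℤ} (hm : ¬IsUnit m)
    (h : Int.gcd (Int.gcd a₁ a₂) b = 1) (hb : m ∣ b) : ¬(m ∣ a₁ ∧ m ∣ a₂) := by
  rintro ⟨h₁, h₂⟩
  have : m ∣ (Int.gcd (Int.gcd a₁ a₂) b : ℤ) := Int.dvd_coe_gcd (Int.dvd_coe_gcd h₁ h₂) hb
  rw [h, Nat.cast_one] at this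
  exact hm (isUnit_of_dvd_one this)

theorem dvd_of_dvd_gcd_gcd {x y z m : ℤ} (hm : m ∣ Int.gcd (Int.gcd x y) z) :
    m ∣ x ∧ m ∣ y ∧ m ∣ z :=
  ⟨hm.trans ((Int.gcd_dvd_left _ _).trans (Int.gcd_dvd_left _ _)),
    hm.trans ((Int.gcd_dvd_left _ _).trans (Int.gcd_dvd_right _ _)),
    hm.trans (Int.gcd_dvd_right _ _)⟩

section CubicNumerators

variable {d a₁ a₂ b : ℤ}

theorem dvd_of_prime_dvd_cubic_numerators {p : ℕ} [Fact p.Prime] (hp2 : p ≠ 2)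
    (hco : ¬((p : ℤ) ∣ a₁ ∧ (p : ℤ) ∣ a₂)) (hb : (p : ℤ) ∣ b)
    (h₁ : (p : ℤ) ∣ a₁ ^ 3 + 3 * d * a₁ * a₂ ^ 2 - 3 * a₁ * b ^ 2)
    (h₂ : (p : ℤ) ∣ 3 * a₁ ^ 2 * a₂ + d * a₂ ^ 3 - 3 * a₂ * b ^ 2) : (p : ℤ) ∣ d := by
  simp only [← ZMod.intCast_zmod_eq_zero_iff_dvd] at hco hb h₁ h₂ ⊢
  push_cast [hb] at h₁ h₂
  refine eq_zero_of_cubic_forms_eq_zero ?_ (not_and_or.mp hco) (by simpa using h₁)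
    (by simpa using h₂)
  exact Ring.two_ne_zero (by rwa [ZMod.ringChar_zmod_n])

theorem sq_dvd_of_sq_dvd_cubic_numerators {p : ℤ} (hp : Prime p) (hpd : p ∣ d)
    (hco : ¬(p ∣ a₁ ∧ p ∣ a₂))
    (h₁ : p ^ 2 ∣ a₁ ^ 3 + 3 * d * a₁ * a₂ ^ 2 - 3 * a₁ * b ^ 2)
    (h₂ : p ^ 2 ∣ 3 * a₁ ^ 2 * a₂ + d * a₂ ^ 3 - 3 * a₂ * b ^ 2) (hb : p ^ 2 ∣ b ^ 3) :
    p ^ 2 ∣ d := by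
  have hpb : p ∣ b := hp.dvd_of_dvd_pow ((dvd_pow_self p two_ne_zero).trans hb)
  have hpa₁ : p ∣ a₁ := by
    refine hp.dvd_of_dvd_pow (n := 3) ?_
    rw [show a₁ ^ 3 = (a₁ ^ 3 + 3 * d * a₁ * a₂ ^ 2 - 3 * a₁ * b ^ 2) - 3 * a₁ * a₂ ^ 2 * d
      + 3 * a₁ * b * b by ring]
    exact (((dvd_pow_self p two_ne_zero).trans h₁).sub (hpd.mul_left _)).add (hpb.mul_left _)
  have hpa₂ : ¬p ∣ a₂ := fun h ↦ hco ⟨hpa₁, h⟩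
  have : p ^ 2 ∣ d * a₂ ^ 3 := by
    rw [show d * a₂ ^ 3 = (3 * a₁ ^ 2 * a₂ + d * a₂ ^ 3 - 3 * a₂ * b ^ 2) - 3 * a₂ * a₁ ^ 2
      + 3 * a₂ * b ^ 2 by ring]
    exact (h₂.sub ((pow_dvd_pow_of_dvd hpa₁ 2).mul_left _)).add
      ((pow_dvd_pow_of_dvd hpb 2).mul_left _)
  exact (((hp.coprime_iff_not_dvd.mpr hpa₂).pow (m := 2) (n := 3))).dvd_of_dvd_mul_right this

theorem cubic_forms_not_both_zero_zmod_sixteen : ∀ d x y : ZMod 16, (d.cast : ZMod 4) ≠ 0 →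
    ((x.cast : ZMod 2) ≠ 0 ∨ (y.cast : ZMod 2) ≠ 0) →
    x ^ 3 + 3 * d * x * y ^ 2 = 0 → 3 * x ^ 2 * y + d * y ^ 3 = 0 → False := by
  decide

theorem sq_eq_zero_of_pow_three_eq_zero_zmod_sixteen : ∀ b : ZMod 16, b ^ 3 = 0 → b ^ 2 = 0 := by
  decide

theorem not_sixteen_dvd_cubic_numerators (hd : ¬(4 : ℤ) ∣ d)
    (hco : ¬((2 : ℤ) ∣ a₁ ∧ (2 : ℤ) ∣ a₂))
    (h₁ : 16 ∣ a₁ ^ 3 + 3 * d * a₁ * a₂ ^ 2 - 3 * a₁ * b ^ 2)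
    (h₂ : 16 ∣ 3 * a₁ ^ 2 * a₂ + d * a₂ ^ 3 - 3 * a₂ * b ^ 2) (hb : 16 ∣ b ^ 3) : False := by
  have hmod {m : ℕ} (hm : m ∣ 16) (x : ℤ) : ((x : ZMod 16).cast : ZMod m) = 0 ↔ (m : ℤ) ∣ x := by
    rw [ZMod.cast_intCast hm, ZMod.intCast_zmod_eq_zero_iff_dvd]
  rw [← Nat.cast_ofNat, ← ZMod.intCast_zmod_eq_zero_iff_dvd] at h₁ h₂ hb
  push_cast at h₁ h₂ hb
  have hb₂ := sq_eq_zero_of_pow_three_eq_zero_zmod_sixteen _ hb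
  simp only [hb₂, mul_zero, sub_zero] at h₁ h₂
  refine cubic_forms_not_both_zero_zmod_sixteen _ _ _ ?_ ?_ h₁ h₂
  · rwa [Ne, hmod (by norm_num : 4 ∣ 16), Nat.cast_ofNat]
  · simpa only [Ne, hmod (by norm_num : 2 ∣ 16), Nat.cast_ofNat, ← not_and_or] using hco

end CubicNumerators

theorem gcd_dvd_eight_mul_d_general
    (d : ℕ) (hsf : Squarefree d)
    (a₁ a₂ b : ℤ) (h : Int.gcd (Int.gcd a₁ a₂) b = 1) :
    (Int.gcd
        (Int.gcd (a₁ ^ 3 + 3 * (d : ℤ) * a₁ * a₂ ^ 2 - 3 * a₁ * b ^ 2)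
          (3 * a₁ ^ 2 * a₂ + (d : ℤ) * a₂ ^ 3 - 3 * a₂ * b ^ 2))
        (b ^ 3) : ℤ) ∣ 8 * (d : ℤ) := by
  generalize hG : Int.gcd (Int.gcd _ _) (b ^ 3) = G
  replace hG {m : ℤ} (hm : m ∣ G) := dvd_of_dvd_gcd_gcd (hG ▸ hm)
  have hsf' : Squarefree (d : ℤ) := Int.squarefree_natCast.mpr hsf
  rw [show 8 * (d : ℤ) = ((8 * d : ℕ) : ℤ) by push_cast; ring, Int.natCast_dvd_natCast,
    Nat.dvd_iff_prime_pow_dvd_dvd]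
  rintro p (_ | k) hp hpk
  · exact one_dvd _
  have hpZ : Prime (p : ℤ) := Nat.prime_iff_prime_int.mp hp
  obtain ⟨hpA₁, hpA₂, hpB⟩ := hG (m := p)
    (by exact_mod_cast (dvd_pow_self p k.succ_ne_zero).trans hpk)
  have hpb : (p : ℤ) ∣ b := hpZ.dvd_of_dvd_pow hpB
  have hco := not_dvd_and_dvd_of_gcd_eq_one hpZ.not_isUnit h hpb
  obtain rfl | hp2 := eq_or_ne p 2
  · have hk : k + 1 ≤ 3 := by
      by_contra! hk
      obtain ⟨h₁, h₂, hB⟩ := hG (m := 16) (by exact_mod_cast (pow_dvd_pow 2 hk).trans hpk)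
      exact not_sixteen_dvd_cubic_numerators (fun h4 ↦ Int.prime_two.not_isUnit (hsf' 2 h4))
        hco h₁ h₂ hB
    exact (pow_dvd_pow 2 hk).trans (dvd_mul_right 8 d)
  have : Fact p.Prime := ⟨hp⟩
  have hpd := dvd_of_prime_dvd_cubic_numerators hp2 hco hpb hpA₁ hpA₂
  obtain rfl : k = 0 := by
    by_contra! hk
    obtain ⟨h₁, h₂, hB⟩ := hG (m := p ^ 2)
      (by exact_mod_cast (pow_dvd_pow p (by omega : 2 ≤ k + 1)).trans hpk)
    have := sq_dvd_of_sq_dvd_cubic_numerators hpZ hpd hco h₁ h₂ hB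
    exact hpZ.not_isUnit (hsf' _ (by rwa [← sq]))
  simpa using (Int.natCast_dvd_natCast.mp hpd).mul_left 8

/-- With `A₁ = a₁³ + 3d·a₁·a₂² - 3a₁b²`, `A₂ = 3a₁²a₂ + d·a₂³ - 3a₂b²`, `B = b³`
arising from expanding `f((a₁ + a₂√d)/b)` with `f(x) = x³ - 3x`, if `gcd(a₁, a₂, b) = 1`
and `d` is a squarefree positive integer, then `G = gcd(A₁, A₂, B)` divides `8d`. -/
theorem gcd_dvd_eight_mul_d
    (d : ℕ) (hd : 0 < d) (hsf : Squarefree d)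
    (a₁ a₂ b : ℤ) (h : Int.gcd (Int.gcd a₁ a₂) b = 1) :
    (Int.gcd
        (Int.gcd (a₁ ^ 3 + 3 * (d : ℤ) * a₁ * a₂ ^ 2 - 3 * a₁ * b ^ 2)
          (3 * a₁ ^ 2 * a₂ + (d : ℤ) * a₂ ^ 3 - 3 * a₂ * b ^ 2))
        (b ^ 3) : ℤ) ∣ 8 * (d : ℤ) :=
  gcd_dvd_eight_mul_d_general d hsf a₁ a₂ b h
end

section
/- For every natural number n, the real algebraic number 2·cos(π/3 + π/2ⁿ) has degree 2ⁿ over ℚ; that is, the minimal polynomial of 2·cos(π/3 + π/2ⁿ) over ℚ has degree 2ⁿ (equivalently, [ℚ(2·cos(π/3 + π/2ⁿ)) : ℚ] = 2ⁿ). -/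
/-!
For `n ≥ 1` write `θ = π/3 + π/2ⁿ = 2πk/m` with `m = 3·2ⁿ⁺¹` and `k = 2ⁿ + 3`, which is coprime
to `m`. Then `ζ = e^{iθ}` is a primitive `m`-th root of unity, of degree `φ(m) = 2ⁿ⁺¹` over `ℚ`.
Since `m > 2`, `ζ` is not real, whereas `2 cos θ = ζ + ζ⁻¹` is; as `ζ` is a root of
`X² - (ζ + ζ⁻¹) X + 1`, the tower `ℚ ⊆ ℚ(ζ + ζ⁻¹) ⊆ ℚ(ζ)` has upper degree `2`. For `n = 0` the
number is `-1`.
-/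

open Polynomial IntermediateField Module Complex

section AddInv

variable {K L : Type*} [Field K] [Field L] [Algebra K L] {ζ : L}

theorem restrictScalars_adjoin_add_inv_adjoin (ζ : L) :
    (K⟮ζ + ζ⁻¹⟯⟮ζ⟯).restrictScalars K = K⟮ζ⟯ := by
  rw [adjoin_simple_adjoin_simple]
  refine le_antisymm (adjoin_le_iff.mpr ?_) (adjoin.mono _ _ _ (by simp))
  have hζ : ζ ∈ K⟮ζ⟯ := mem_adjoin_simple_self K ζ
  rintro z (rfl | rfl)
  · exact add_mem hζ (inv_mem hζ)
  · exact hζ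

theorem finrank_adjoin_adjoin_add_inv (hζ : ζ ∉ K⟮ζ + ζ⁻¹⟯) :
    finrank K⟮ζ + ζ⁻¹⟯ K⟮ζ + ζ⁻¹⟯⟮ζ⟯ = 2 := by
  set F := K⟮ζ + ζ⁻¹⟯
  have hζ0 : ζ ≠ 0 := by rintro rfl; exact hζ (zero_mem F)
  set p : F[X] := X ^ 2 - C (AdjoinSimple.gen K (ζ + ζ⁻¹)) * X + 1
  have hp : p.Monic := by unfold p; monicity!
  have hpζ : aeval ζ p = 0 := by
    simp only [p, map_add, map_sub, map_mul, map_pow, aeval_X, aeval_C, map_one]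
    rw [AdjoinSimple.algebraMap_gen]
    field_simp
    ring
  have hint : IsIntegral F ζ := ⟨p, hp, by rwa [← aeval_def]⟩
  rw [adjoin.finrank hint]
  refine le_antisymm ?_ ((minpoly.two_le_natDegree_iff hint).mpr ?_)
  · calc (minpoly F ζ).natDegree ≤ p.natDegree :=
          natDegree_le_of_dvd (minpoly.dvd F ζ hpζ) hp.ne_zero
      _ ≤ 2 := by unfold p; compute_degree
  · rintro ⟨y, hy⟩
    exact hζ (hy ▸ y.2)

theorem natDegree_minpoly_add_inv_mul_two (hint : IsIntegral K ζ) (hζ : ζ ∉ K⟮ζ + ζ⁻¹⟯) :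
    (minpoly K (ζ + ζ⁻¹)).natDegree * 2 = (minpoly K ζ).natDegree := by
  rw [← adjoin.finrank hint, ← adjoin.finrank (hint.add hint.inv),
    ← finrank_adjoin_adjoin_add_inv hζ, finrank_mul_finrank K K⟮ζ + ζ⁻¹⟯ K⟮ζ + ζ⁻¹⟯⟮ζ⟯]
  conv_rhs => rw [← restrictScalars_adjoin_add_inv_adjoin ζ]
  rfl

end AddInv

theorem Complex.im_eq_zero_of_mem_adjoin_ofReal {x : ℝ} {z : ℂ} (hz : z ∈ ℚ⟮(x : ℂ)⟯) :
    z.im = 0 := by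
  have hle : ℚ⟮(x : ℂ)⟯ ≤ (ofRealAm.restrictScalars ℚ).fieldRange :=
    adjoin_simple_le_iff.mpr ⟨x, rfl⟩
  obtain ⟨r, rfl⟩ := hle hz
  exact ofReal_im r

theorem IsPrimitiveRoot.im_ne_zero {ζ : ℂ} {m : ℕ} (hζ : IsPrimitiveRoot ζ m) (hm : 2 < m) :
    ζ.im ≠ 0 := by
  intro him
  have hre : ζ = ζ.re := ext rfl (by simp [him])
  have hnorm : |ζ.re| = 1 := by
    rw [← Real.norm_eq_abs, ← norm_real, ← hre]
    exact norm_eq_one_of_pow_eq_one hζ.pow_eq_one (by omega)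
  have hsq : ζ ^ 2 = 1 := by
    rw [hre, ← ofReal_pow, ← sq_abs, hnorm]; simp
  have := Nat.le_of_dvd two_pos (hζ.dvd_of_pow_eq_one 2 hsq)
  omega

theorem Complex.minpoly_ofReal (x : ℝ) : minpoly ℚ (x : ℂ) = minpoly ℚ x :=
  minpoly.algebraMap_eq ofReal_injective x

theorem Complex.ofReal_two_mul_cos (θ : ℝ) :
    ((2 * Real.cos θ : ℝ) : ℂ) = exp (θ * I) + (exp (θ * I))⁻¹ := by
  rw [← exp_neg, ofReal_mul, ofReal_cos, ofReal_ofNat, two_cos, neg_mul]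

theorem Nat.totient_three_mul_two_pow_succ (k : ℕ) :
    Nat.totient (3 * 2 ^ (k + 1)) = 2 ^ (k + 1) := by
  rw [Nat.totient_mul (Nat.Coprime.pow_right _ (by norm_num)), Nat.totient_prime Nat.prime_three,
    Nat.totient_prime_pow_succ Nat.prime_two]
  ring

theorem Nat.coprime_two_pow_succ_add_three (k l : ℕ) :
    (2 ^ (k + 1) + 3).Coprime (3 * 2 ^ l) := by
  refine Nat.Coprime.mul_right ?_ (Nat.Coprime.pow_right _ ?_)
  · exact Nat.coprime_add_self_left.mpr (Nat.Coprime.pow_left _ (by norm_num))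
  · exact Nat.coprime_two_right.mpr (by simp [pow_succ, parity_simps])

/-- The real algebraic number `2·cos(π/3 + π/2ⁿ)` has degree `2ⁿ` over `ℚ`:
its minimal polynomial over `ℚ` has degree `2ⁿ`. -/
theorem degree_two_cos_pi_third_add (n : ℕ) :
    (minpoly ℚ (2 * Real.cos (Real.pi / 3 + Real.pi / 2 ^ n))).natDegree = 2 ^ n := by
  obtain _ | n := n
  · have hval : 2 * Real.cos (Real.pi / 3 + Real.pi / 2 ^ 0) = algebraMap ℚ ℝ (-1) := by
      rw [pow_zero, div_one, Real.cos_add_pi, Real.cos_pi_div_three]; norm_num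
    rw [hval, minpoly.eq_X_sub_C, natDegree_X_sub_C, pow_zero]
  set θ := Real.pi / 3 + Real.pi / 2 ^ (n + 1)
  set ζ := exp (θ * I)
  have hζ : IsPrimitiveRoot ζ (3 * 2 ^ (n + 2)) := by
    convert isPrimitiveRoot_exp_of_coprime _ _ (by positivity)
      (Nat.coprime_two_pow_succ_add_three n (n + 2)) using 2
    simp only [θ]
    push_cast
    field_simp
    ring
  have hm : 2 < 3 * 2 ^ (n + 2) := by
    have := Nat.one_le_two_pow (n := n + 2); omega
  have hnotreal : ζ ∉ ℚ⟮ζ + ζ⁻¹⟯ := fun h ↦ hζ.im_ne_zero hm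
    (im_eq_zero_of_mem_adjoin_ofReal (ofReal_two_mul_cos θ ▸ h))
  have hdeg := natDegree_minpoly_add_inv_mul_two (hζ.isIntegral (by positivity)).tower_top hnotreal
  rw [← cyclotomic_eq_minpoly_rat hζ (by positivity), natDegree_cyclotomic,
    Nat.totient_three_mul_two_pow_succ, ← ofReal_two_mul_cos, minpoly_ofReal] at hdeg
  exact Nat.eq_of_mul_eq_mul_right two_pos (hdeg.trans (pow_succ 2 (n + 1)))
end
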